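/- arXiv:1208.5045 — 6 statements merged into one kernel-verified Lean document; each statement's English description precedes it below -/
import Mathlib

section
/- Let (X,d) be a metric space and (P_k)_{k∈K} a family of nonempty closed subsets of X. If the neutral Voronoi region X \ ⋃_{k∈K} R_k is empty (where R_k is the Voronoi cell of P_k), then the union ⋃_{k∈K} P_k has no external accumulation point, i.e., no accumulation point lying outside ⋃_{k∈K} P_k. -/
open Metric Filter

/-- if there is no neutral Voronoi region and the sites are closed,
then the union of the sites has no external accumulation point. -/
theorem stmt_2 {X : Type*} [MetricSpace X] {K : Type*} (hK : ∃ k j : K, k ≠ j)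
    (P : K → Set X) (hP : ∀ k, (P k).Nonempty) (hPc : ∀ k, IsClosed (P k))
    (R : K → Set X)
    (hR : ∀ k, R k = {x : X | ∀ j : K, j ≠ k → infDist x (P k) ≤ infDist x (P j)})
    (hNoNeutral : (⋃ k : K, R k) = Set.univ) :
    ∀ y : X, AccPt y (𝓟 (⋃ k : K, P k)) → y ∈ ⋃ k : K, P k := by
  intro y hacc
  by_contra hy
  have hyk : ∀ j, y ∉ P j := by
    intro j hj
    exact hy (Set.mem_iUnion.mpr ⟨j, hj⟩)
  obtain ⟨k, hk⟩ : ∃ k, y ∈ R k := Set.mem_iUnion.mp (hNoNeutral ▸ Set.mem_univ y)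
  have heps : 0 < infDist y (P k) :=
    (hPc k).notMem_iff_infDist_pos (hP k) |>.mp (hyk k)
  have hmin : ∀ j, infDist y (P k) ≤ infDist y (P j) := by
    intro j
    rcases eq_or_ne j k with rfl | hjk
    · exact le_refl _
    · rw [hR k] at hk
      exact hk j hjk
  obtain ⟨z, hz, hzy⟩ := accPt_iff_nhds.mp hacc (ball y (infDist y (P k)))
    (ball_mem_nhds _ heps)
  obtain ⟨hzb, hzP⟩ := hz
  obtain ⟨j, hj⟩ := Set.mem_iUnion.mp hzP
  have : infDist y (P k) ≤ dist y z :=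
    le_trans (hmin j) (infDist_le_dist_of_mem hj)
  rw [mem_ball, dist_comm] at hzb
  exact absurd hzb (not_lt.mpr this)
end

section
/- Let (X,d) be a metric space in which every bounded infinite subset has an accumulation point (finitely compact), and let (P_k)_{k∈K} be a family of nonempty subsets of X. If ⋃_{k∈K} P_k has no accumulation point, then the neutral Voronoi region is empty: every x ∈ X belongs to some Voronoi cell R_k. -/
open Metric Filter

/-- in a finitely compact metric space, if the union of the sites has no
accumulation point then there is no neutral Voronoi region. -/
theorem stmt_3 {X : Type*} [MetricSpace X] {K : Type*} (hK : ∃ k j : K, k ≠ j)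
    (hfc : ∀ S : Set X, Bornology.IsBounded S → S.Infinite → ∃ y : X, AccPt y (𝓟 S))
    (P : K → Set X) (hP : ∀ k, (P k).Nonempty)
    (R : K → Set X)
    (hR : ∀ k, R k = {x : X | ∀ j : K, j ≠ k → infDist x (P k) ≤ infDist x (P j)})
    (hacc : ∀ y : X, ¬ AccPt y (𝓟 (⋃ k : K, P k))) :
    ∀ x : X, ∃ k : K, x ∈ R k := by
  intro x
  obtain ⟨k0, -, -⟩ := hK
  set U : Set X := ⋃ k : K, P k with hU
  set r : ℝ := infDist x (P k0) + 1 with hr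
  have hSfin : (U ∩ closedBall x r).Finite := by
    by_contra h
    have hinf : (U ∩ closedBall x r).Infinite := h
    have hbdd : Bornology.IsBounded (U ∩ closedBall x r) :=
      (isBounded_closedBall).subset Set.inter_subset_right
    obtain ⟨y, hy⟩ := hfc _ hbdd hinf
    exact hacc y (hy.mono (principal_mono.2 Set.inter_subset_left))
  have hlt : infDist x (P k0) < r := by rw [hr]; linarith
  obtain ⟨p, hpP, hpd⟩ := (infDist_lt_iff (hP k0)).1 hlt
  have hpS : p ∈ U ∩ closedBall x r := by
    refine ⟨Set.mem_iUnion.2 ⟨k0, hpP⟩, ?_⟩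
    rw [mem_closedBall, dist_comm]
    exact hpd.le
  obtain ⟨p0, hp0S, hmin⟩ := Set.exists_min_image _ (fun q => dist x q) hSfin ⟨p, hpS⟩
  obtain ⟨k1, hp0P⟩ := Set.mem_iUnion.1 hp0S.1
  refine ⟨k1, ?_⟩
  rw [hR]
  intro j _
  have h1 : infDist x (P k1) ≤ dist x p0 := infDist_le_dist_of_mem hp0P
  by_contra hcon
  push_neg at hcon
  have h2 : infDist x (P j) < dist x p0 := lt_of_lt_of_le hcon h1
  obtain ⟨q, hqP, hqd⟩ := (infDist_lt_iff (hP j)).1 h2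
  have hqS : q ∈ U ∩ closedBall x r := by
    refine ⟨Set.mem_iUnion.2 ⟨j, hqP⟩, ?_⟩
    rw [mem_closedBall, dist_comm]
    exact le_trans hqd.le (le_trans (hmin p hpS) hpd.le)
  exact absurd (hmin q hqS) (not_le.2 hqd)
end

section
/- In the Hilbert space ℓ² with point sites P_k = {((k+1)/k)·e_k} for k ∈ ℕ (e_k the k-th standard basis vector), the origin 0 belongs to the neutral Voronoi region (it has no nearest site since d(0,P_{k+1}) < d(0,P_k) for all k), yet the union ⋃_k P_k has no accumulation point, since d(P_k,P_j) ≥ √2 for all k ≠ j. -/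
open Metric Filter RealInnerProductSpace

local notation "H" => lp (fun _ : ℕ => ℝ) 2

lemma aux_norm_single (k : ℕ) : ‖(lp.single 2 k (1:ℝ) : H)‖ = 1 := by
  have := lp.norm_single (p := 2) (E := fun _ : ℕ => ℝ) (by norm_num) k (1:ℝ)
  simpa using this

lemma aux_norm (k : ℕ+) (a : ℝ) (ha : 0 ≤ a) :
    ‖a • (lp.single 2 (k:ℕ) (1:ℝ) : H)‖ = a := by
  rw [norm_smul, aux_norm_single]
  simp [abs_of_nonneg ha]

lemma aux_inner (k j : ℕ) (h : k ≠ j) :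
    ⟪(lp.single 2 k (1:ℝ) : H), lp.single 2 j (1:ℝ)⟫ = 0 := by
  rw [lp.inner_single_left]
  simp [lp.single_apply, h]

lemma aux_dist (k j : ℕ+) (h : k ≠ j) (a b : ℝ) (ha : 1 ≤ a) (hb : 1 ≤ b) :
    Real.sqrt 2 ≤ dist (a • (lp.single 2 (k:ℕ) (1:ℝ) : H)) (b • lp.single 2 (j:ℕ) (1:ℝ)) := by
  set u : H := lp.single 2 (k:ℕ) (1:ℝ)
  set v : H := lp.single 2 (j:ℕ) (1:ℝ)
  have hkj : (k:ℕ) ≠ (j:ℕ) := by exact_mod_cast fun hh => h (PNat.coe_injective hh)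
  have hin : ⟪a • u, b • v⟫ = 0 := by
    rw [real_inner_smul_left, real_inner_smul_right, aux_inner _ _ hkj]; ring
  have hnu : ‖a • u‖ = a := aux_norm k a (by linarith)
  have hnv : ‖b • v‖ = b := aux_norm j b (by linarith)
  have hsq : ‖a • u - b • v‖ ^ 2 = a ^ 2 + b ^ 2 := by
    rw [norm_sub_sq_real, hin, hnu, hnv]; ring
  rw [dist_eq_norm]
  have h2 : (2:ℝ) ≤ ‖a • u - b • v‖ ^ 2 := by rw [hsq]; nlinarith
  have := Real.sqrt_le_sqrt h2
  rwa [Real.sqrt_sq (norm_nonneg _)] at this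

lemma aux_mono (k : ℕ+) :
    ((k:ℝ) + 1 + 1) / ((k:ℝ) + 1) < ((k:ℝ) + 1) / (k:ℝ) := by
  have hk : (0:ℝ) < (k:ℝ) := by exact_mod_cast k.pos
  rw [div_lt_div_iff₀ (by linarith) hk]
  nlinarith

/-- in ℓ², with sites P_k = {((k+1)/k)·e_k}, the origin lies in the neutral
Voronoi region, yet the union of the sites has no accumulation point. -/
theorem stmt_4
    (p : ℕ+ → lp (fun _ : ℕ => ℝ) 2)
    (hp : ∀ k : ℕ+, p k = (((k : ℝ) + 1) / (k : ℝ)) • lp.single 2 (k : ℕ) (1 : ℝ))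
    (P : ℕ+ → Set (lp (fun _ : ℕ => ℝ) 2)) (hP : ∀ k, P k = {p k})
    (R : ℕ+ → Set (lp (fun _ : ℕ => ℝ) 2))
    (hR : ∀ k, R k = {x | ∀ j : ℕ+, j ≠ k → infDist x (P k) ≤ infDist x (P j)}) :
    (0 : lp (fun _ : ℕ => ℝ) 2) ∉ ⋃ k : ℕ+, R k ∧
      (∀ k : ℕ+, ∃ j : ℕ+, dist (0 : lp (fun _ : ℕ => ℝ) 2) (p j) < dist 0 (p k)) ∧
      (∀ y : lp (fun _ : ℕ => ℝ) 2, ¬ AccPt y (𝓟 (⋃ k : ℕ+, P k))) ∧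
      (∀ k j : ℕ+, k ≠ j → Real.sqrt 2 ≤ dist (p k) (p j)) := by
  have hkR : ∀ k : ℕ+, (1:ℝ) ≤ ((k:ℝ) + 1) / (k:ℝ) := by
    intro k
    have hk : (0:ℝ) < (k:ℝ) := by exact_mod_cast k.pos
    rw [le_div_iff₀ hk]; linarith
  have hdist0 : ∀ k : ℕ+, dist (0 : H) (p k) = ((k:ℝ) + 1) / (k:ℝ) := by
    intro k
    rw [hp k, dist_comm, dist_zero_right, aux_norm k _ (by linarith [hkR k])]
  have hlt : ∀ k : ℕ+, dist (0 : H) (p (k + 1)) < dist (0 : H) (p k) := by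
    intro k
    rw [hdist0, hdist0]
    have := aux_mono k
    push_cast
    convert this using 2 <;> push_cast <;> ring
  have hsep : ∀ k j : ℕ+, k ≠ j → Real.sqrt 2 ≤ dist (p k) (p j) := by
    intro k j h
    rw [hp k, hp j]
    exact aux_dist k j h _ _ (hkR k) (hkR j)
  refine ⟨?_, fun k => ⟨k + 1, hlt k⟩, ?_, hsep⟩
  · intro hmem
    obtain ⟨_, ⟨k, rfl⟩, hk0⟩ := hmem
    change (0:H) ∈ R k at hk0
    rw [hR k] at hk0
    have := hk0 (k + 1) (by
      intro h; simpa using congrArg (fun x : ℕ+ => (x:ℕ)) h)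
    rw [hP k, hP (k+1), infDist_singleton, infDist_singleton] at this
    exact absurd this (not_le.mpr (hlt k))
  · intro y hy
    rw [accPt_iff_nhds] at hy
    have hsqrt : (1:ℝ) < Real.sqrt 2 := by
      nlinarith [Real.sq_sqrt (by norm_num : (0:ℝ) ≤ 2), Real.sqrt_nonneg 2]
    obtain ⟨q, ⟨hq1, hq2⟩, hqy⟩ := hy (ball y (1/2)) (ball_mem_nhds y (by norm_num))
    have hdyq : 0 < dist y q := dist_pos.mpr fun h => hqy h.symm
    obtain ⟨q', ⟨hq'1, hq'2⟩, hq'y⟩ := hy (ball y (min (1/2) (dist y q)))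
      (ball_mem_nhds y (lt_min (by norm_num) hdyq))
    have hq'ne : q' ≠ q := by
      intro hEq
      have : dist y q' < dist y q := lt_of_lt_of_le (mem_ball'.mp hq'1) (min_le_right _ _)
      rw [hEq] at this; exact lt_irrefl _ this
    obtain ⟨_, ⟨k, rfl⟩, hk⟩ := hq2
    obtain ⟨_, ⟨j, rfl⟩, hj⟩ := hq'2
    change q ∈ P k at hk; change q' ∈ P j at hj
    rw [hP k] at hk; rw [hP j] at hj
    rw [Set.mem_singleton_iff] at hk hj
    have hkj : j ≠ k := fun h => hq'ne (by rw [hj, hk, h])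
    have h1 : dist (p j) (p k) < 1 := by
      rw [← hj, ← hk]
      calc dist q' q ≤ dist q' y + dist y q := dist_triangle _ _ _
        _ < 1/2 + 1/2 := by
            have := (mem_ball'.mp hq'1).trans_le (min_le_left _ _)
            have := mem_ball'.mp hq1
            rw [dist_comm q' y]
            linarith [mem_ball.mp hq'1, mem_ball.mp hq1,
              lt_of_lt_of_le (mem_ball.mp hq'1) (min_le_left _ _)]
        _ = 1 := by norm_num
    exact absurd (hsep j k hkj) (not_le.mpr (h1.trans hsqrt))
end

section
/- If in a metric space X one has sites P_k ⊆ R_k ⊆ X for all k ∈ K with R ⊆ Dom(R) (i.e., R_k ⊆ dom(P_k, ⋃_{j≠k} R_j) for all k), and the closures of the sites are pairwise disjoint, then the regions R_k are pairwise disjoint. -/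
open Metric

/-- in a territory diagram, if the closures of the sites are pairwise
disjoint then the regions are pairwise disjoint. -/
theorem stmt_5 {X : Type*} [MetricSpace X] {K : Type*} (hK : ∃ k j : K, k ≠ j)
    (P R : K → Set X) (hP : ∀ k, (P k).Nonempty) (hPR : ∀ k, P k ⊆ R k)
    (hterr : ∀ k, R k ⊆ {x : X | infDist x (P k) ≤ infDist x (⋃ j ∈ {j : K | j ≠ k}, R j)})
    (hclos : ∀ k j : K, k ≠ j → closure (P k) ∩ closure (P j) = ∅) :
    ∀ k j : K, k ≠ j → R k ∩ R j = ∅ := by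
  intro k j hkj
  rw [Set.eq_empty_iff_forall_notMem]
  rintro x ⟨hxk, hxj⟩
  have hmemk : x ∈ ⋃ i ∈ {i : K | i ≠ k}, R i :=
    Set.mem_biUnion (show j ∈ {i : K | i ≠ k} from Ne.symm hkj) hxj
  have hmemj : x ∈ ⋃ i ∈ {i : K | i ≠ j}, R i :=
    Set.mem_biUnion (show k ∈ {i : K | i ≠ j} from hkj) hxk
  have h1 : infDist x (P k) = 0 :=
    le_antisymm ((hterr k hxk).trans (by rw [infDist_zero_of_mem hmemk])) infDist_nonneg
  have h2 : infDist x (P j) = 0 :=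
    le_antisymm ((hterr j hxj).trans (by rw [infDist_zero_of_mem hmemj])) infDist_nonneg
  have hck : x ∈ closure (P k) := (mem_closure_iff_infDist_zero (hP k)).2 h1
  have hcj : x ∈ closure (P j) := (mem_closure_iff_infDist_zero (hP j)).2 h2
  have := hclos k j hkj
  rw [Set.eq_empty_iff_forall_notMem] at this
  exact this x ⟨hck, hcj⟩
end

section
/- Let (X,d) be a metric space, (P_k)_{k∈K} nonempty subsets with r_k := inf{d(P_k,P_j) : j ≠ k} > 0 for all k. If R = (R_k) satisfies P_k ⊆ R_k ⊆ X and R_k ⊆ dom(P_k, ⋃_{j≠k} R_j) for all k, then for all j ≠ k the distance between regions satisfies d(R_k,R_j) ≥ max{r_k, r_j}/3. -/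
open Metric

set_option maxHeartbeats 1000000

/-- Distance between two subsets of a metric space. -/
noncomputable def setDist {X : Type*} [MetricSpace X] (A B : Set X) : ℝ :=
  ⨅ a : A, Metric.infDist (a : X) B

lemma setDist_le_infDist {X : Type*} [MetricSpace X] {A : Set X} (B : Set X) {a : X}
    (ha : a ∈ A) : setDist A B ≤ Metric.infDist a B := by
  have hbdd : BddBelow (Set.range fun a : A => Metric.infDist (a : X) B) := by
    refine ⟨0, ?_⟩
    rintro _ ⟨x, rfl⟩
    exact Metric.infDist_nonneg
  rw [setDist]
  exact ciInf_le hbdd ⟨a, ha⟩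

lemma setDist_nonneg {X : Type*} [MetricSpace X] (A B : Set X) : 0 ≤ setDist A B :=
  Real.iInf_nonneg fun _ => Metric.infDist_nonneg

/-- regions of a territory diagram of positively separated sites are
separated by at least max{r_k, r_j}/3. -/
theorem stmt_6 {X : Type*} [MetricSpace X] {K : Type*} (hK : ∃ k j : K, k ≠ j)
    (P R : K → Set X) (hP : ∀ k, (P k).Nonempty) (hPR : ∀ k, P k ⊆ R k)
    (r : K → ℝ) (hr : ∀ k, r k = ⨅ j : {j : K // j ≠ k}, setDist (P k) (P (j : K)))
    (hrpos : ∀ k, 0 < r k)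
    (hterr : ∀ k, R k ⊆ {x : X | infDist x (P k) ≤ infDist x (⋃ j ∈ {j : K | j ≠ k}, R j)}) :
    ∀ k j : K, k ≠ j → max (r k) (r j) / 3 ≤ setDist (R k) (R j) := by
  have key : ∀ k j : K, k ≠ j → ∀ x ∈ R k, ∀ y ∈ R j, r k ≤ 3 * dist x y := by
    intro k j hkj x hx y hy
    have hxP : infDist x (P k) ≤ dist x y := by
      refine le_trans (hterr k hx) (infDist_le_dist_of_mem ?_)
      exact Set.mem_biUnion (show j ∈ {i : K | i ≠ k} from hkj.symm) hy
    have hyP : infDist y (P j) ≤ dist x y := by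
      refine le_trans (hterr j hy) ?_
      have h : infDist y (⋃ i ∈ {i : K | i ≠ j}, R i) ≤ dist y x :=
        infDist_le_dist_of_mem
          (Set.mem_biUnion (show k ∈ {i : K | i ≠ j} from hkj) hx)
      rwa [dist_comm] at h
    apply le_of_forall_pos_le_add
    intro ε hε
    obtain ⟨p, hp, hxp⟩ := (infDist_lt_iff (hP k)).1
      (show infDist x (P k) < dist x y + ε / 2 by linarith)
    obtain ⟨q, hq, hyq⟩ := (infDist_lt_iff (hP j)).1
      (show infDist y (P j) < dist x y + ε / 2 by linarith)
    have h1 : r k ≤ setDist (P k) (P j) := by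
      rw [hr k]
      have hbdd : BddBelow (Set.range fun i : {j' : K // j' ≠ k} => setDist (P k) (P (i : K))) := by
        refine ⟨0, ?_⟩
        rintro _ ⟨i, rfl⟩
        exact setDist_nonneg _ _
      exact ciInf_le hbdd ⟨j, hkj.symm⟩
    have h2 : setDist (P k) (P j) ≤ dist p q :=
      le_trans (setDist_le_infDist (P j) hp) (infDist_le_dist_of_mem hq)
    have h3 : dist p q ≤ dist p x + dist x y + dist y q := by
      calc dist p q ≤ dist p x + dist x q := dist_triangle _ _ _
        _ ≤ dist p x + (dist x y + dist y q) := by linarith [dist_triangle x y q]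
        _ = dist p x + dist x y + dist y q := by ring
    have hxp' : dist p x < dist x y + ε / 2 := by rwa [dist_comm]
    linarith
  intro k j hkj
  have hRj : (R j).Nonempty := ⟨(hP j).some, hPR j (hP j).some_mem⟩
  haveI : Nonempty ↥(R k) := ⟨⟨(hP k).some, hPR k (hP k).some_mem⟩⟩
  rw [setDist]
  refine le_ciInf ?_
  rintro ⟨x, hx⟩
  by_contra hcon
  push_neg at hcon
  obtain ⟨y, hy, hxy⟩ := (infDist_lt_iff hRj).1 hcon
  have h1 := key k j hkj x hx y hy
  have h2 := key j k hkj.symm y hy x hx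
  rw [dist_comm] at h2
  have hmax : max (r k) (r j) ≤ 3 * dist x y := max_le h1 h2
  have hxy' : dist x y < max (r k) (r j) / 3 := hxy
  linarith
end

section
/- Let (X,d) be a geodesic metric space and let (P_k)_{k∈K} be nonempty subsets with r_k := inf{d(P_k,P_j) : j ≠ k} > 0 for all k. If R = (R_k) is a territory diagram (P_k ⊆ R_k and R_k ⊆ dom(P_k, ⋃_{j≠k} R_j) for all k), then the neutral region N = X \ ⋃_{k∈K} R_k is nonempty. -/
open Metric

/-- a territory diagram of positively separated sites in a geodesic
metric space has a nonempty neutral region. -/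
theorem stmt_10 {X : Type*} [MetricSpace X] {K : Type*} (hK : ∃ k j : K, k ≠ j)
    (hgeo : ∀ x y : X, ∃ γ : ℝ → X, γ 0 = x ∧ γ (dist x y) = y ∧
      ∀ s ∈ Set.Icc 0 (dist x y), ∀ t ∈ Set.Icc 0 (dist x y), dist (γ s) (γ t) = |s - t|)
    (P R : K → Set X) (hP : ∀ k, (P k).Nonempty) (hPR : ∀ k, P k ⊆ R k)
    (r : K → ℝ) (hr : ∀ k, r k = ⨅ j : {j : K // j ≠ k}, setDist (P k) (P (j : K)))
    (hrpos : ∀ k, 0 < r k)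
    (hterr : ∀ k, R k ⊆ {x : X | infDist x (P k) ≤ infDist x (⋃ j ∈ {j : K | j ≠ k}, R j)}) :
    (Set.univ \ ⋃ k : K, R k).Nonempty := by
  by_contra hcon
  rw [Set.not_nonempty_iff_eq_empty, Set.diff_eq_empty] at hcon
  obtain ⟨k, j0, hkj0⟩ := hK
  have hjk0 : j0 ≠ k := Ne.symm hkj0
  -- basic facts about setDist and r
  have hsd_nonneg : ∀ (A B : Set X), 0 ≤ setDist A B := fun A B =>
    Real.iInf_nonneg fun a => infDist_nonneg
  have hrk_le_sd : ∀ m : K, m ≠ k → r k ≤ setDist (P k) (P m) := by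
    intro m hm
    rw [hr k]
    exact ciInf_le ⟨0, fun x ⟨i, hi⟩ => hi ▸ hsd_nonneg _ _⟩ (⟨m, hm⟩ : {j : K // j ≠ k})
  have hsd_le : ∀ (m : K) (a : X), a ∈ P k → setDist (P k) (P m) ≤ infDist a (P m) := by
    intro m a ha
    exact ciInf_le ⟨0, fun x ⟨i, hi⟩ => hi ▸ infDist_nonneg⟩ (⟨a, ha⟩ : (P k : Set X))
  have hrk_le_inf : ∀ (m : K), m ≠ k → ∀ a ∈ P k, r k ≤ infDist a (P m) := by
    intro m hm a ha
    exact le_trans (hrk_le_sd m hm) (hsd_le m a ha)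
  set ε := r k / 5 with hε_def
  have hε : 0 < ε := by have := hrpos k; positivity
  -- choose j and p with infDist p (P j) < r k + ε
  have hne1 : Nonempty {j : K // j ≠ k} := ⟨⟨j0, hjk0⟩⟩
  have h1 : (⨅ j : {j : K // j ≠ k}, setDist (P k) (P (j : K))) < r k + ε := by
    rw [← hr k]; linarith
  obtain ⟨⟨j, hjk⟩, hj⟩ := exists_lt_of_ciInf_lt h1
  have hne2 : Nonempty (P k : Set X) := (hP k).to_subtype
  rw [setDist] at hj
  obtain ⟨⟨p, hpPk⟩, hp⟩ := exists_lt_of_ciInf_lt hj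
  -- choose q ∈ P j with dist p q < r k + 2ε
  obtain ⟨q, hqPj, hpq⟩ := (infDist_lt_iff (hP j)).1 (show infDist p (P j) < infDist p (P j) + ε by linarith)
  have hL : dist p q < r k + 2 * ε := by
    have := hrk_le_inf j hjk p hpPk
    linarith
  -- the geodesic
  obtain ⟨γ, hγ0, hγL, hγd⟩ := hgeo p q
  set L := dist p q with hLdef
  have hL0 : 0 ≤ L := dist_nonneg
  -- r k ≤ infDist q (P k)
  have hqPk : r k ≤ infDist q (P k) := by
    by_contra h
    obtain ⟨a, ha, hd⟩ := (infDist_lt_iff (hP k)).1 (not_le.1 h)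
    have h1 := hrk_le_inf j hjk a ha
    have h2 : infDist a (P j) ≤ dist a q := infDist_le_dist_of_mem hqPj
    rw [dist_comm q a] at hd
    linarith
  set A := {t : ℝ | t ∈ Set.Icc 0 L ∧ γ t ∈ R k} with hAdef
  have hA0 : (0 : ℝ) ∈ A := ⟨⟨le_refl 0, hL0⟩, hγ0 ▸ hPR k hpPk⟩
  have hAbdd : BddAbove A := ⟨L, fun t ht => ht.1.2⟩
  set t0 := sSup A with ht0def
  have ht00 : 0 ≤ t0 := le_csSup hAbdd hA0
  set U := ⋃ j ∈ {j : K | j ≠ k}, R j with hUdef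
  have hqU : q ∈ U := Set.mem_biUnion hjk (hPR j hqPj)
  -- coverage
  have hcov : ∀ s : ℝ, s ∈ Set.Icc 0 L → s ∉ A → ∃ m, m ≠ k ∧ γ s ∈ R m := by
    intro s hs hsA
    have : γ s ∈ ⋃ m, R m := hcon (Set.mem_univ _)
    obtain ⟨m, hm⟩ := Set.mem_iUnion.1 this
    rcases eq_or_ne m k with rfl | hmk
    · exact absurd ⟨hs, hm⟩ hsA
    · exact ⟨m, hmk, hm⟩
  -- weak bound: t ∈ A → t ≤ L - r k / 2
  have hweak : ∀ t ∈ A, t ≤ L - r k / 2 := by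
    intro t ht
    obtain ⟨⟨ht0', htL⟩, htR⟩ := ht
    have hup : infDist (γ t) (P k) ≤ L - t := by
      have h1 : infDist (γ t) (P k) ≤ infDist (γ t) U := hterr k htR
      have h2 : infDist (γ t) U ≤ dist (γ t) q := infDist_le_dist_of_mem hqU
      have h3 : dist (γ t) q = L - t := by
        rw [← hγL]
        rw [hγd t ⟨ht0', htL⟩ L ⟨hL0, le_refl L⟩]
        rw [abs_of_nonpos (by linarith)]; ring
      linarith
    have hlow : r k - (L - t) ≤ infDist (γ t) (P k) := by
      have h4 : infDist q (P k) ≤ infDist (γ t) (P k) + dist (γ t) q := by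
        rw [dist_comm]; exact infDist_le_infDist_add_dist
      have h3 : dist (γ t) q = L - t := by
        rw [← hγL, hγd t ⟨ht0', htL⟩ L ⟨hL0, le_refl L⟩, abs_of_nonpos (by linarith)]; ring
      rw [h3] at h4
      linarith [hqPk]
    linarith
  have ht0weak : t0 ≤ L - r k / 2 := csSup_le ⟨0, hA0⟩ hweak
  have ht0L : t0 < L := by have := hrpos k; linarith
  -- points beyond t0 are in U
  have hbeyond : ∀ s : ℝ, t0 < s → s ≤ L → ∃ m, m ≠ k ∧ γ s ∈ R m := by
    intro s hs1 hs2
    have hsA : s ∉ A := fun hsA => absurd (le_csSup hAbdd hsA) (not_le.2 hs1)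
    exact hcov s ⟨le_trans ht00 (le_of_lt hs1), hs2⟩ hsA
  have hbeyondU : ∀ s : ℝ, t0 < s → s ≤ L → γ s ∈ U := by
    intro s hs1 hs2
    obtain ⟨m, hmk, hm⟩ := hbeyond s hs1 hs2
    exact Set.mem_biUnion hmk hm
  -- strong bound: t ∈ A → infDist (γ t) (P k) ≤ t0 - t
  have hstrong : ∀ t ∈ A, infDist (γ t) (P k) ≤ t0 - t := by
    intro t ht
    obtain ⟨⟨ht0', htL⟩, htR⟩ := ht
    have htle : t ≤ t0 := le_csSup hAbdd ⟨⟨ht0', htL⟩, htR⟩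
    apply le_of_forall_pos_le_add
    intro δ hδ
    set s := min (t0 + δ) L with hsdef
    have hs1 : t0 < s := lt_min (by linarith) ht0L
    have hs2 : s ≤ L := min_le_right _ _
    have hs0 : 0 ≤ s := le_trans ht00 (le_of_lt hs1)
    have hUs : γ s ∈ U := hbeyondU s hs1 hs2
    have h1 : infDist (γ t) (P k) ≤ infDist (γ t) U := hterr k htR
    have h2 : infDist (γ t) U ≤ dist (γ t) (γ s) := infDist_le_dist_of_mem hUs
    have h3 : dist (γ t) (γ s) = s - t := by
      rw [hγd t ⟨ht0', htL⟩ s ⟨hs0, hs2⟩, abs_of_nonpos (by linarith)]; ring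
    have hsle : s ≤ t0 + δ := min_le_left _ _
    linarith
  -- t0 ≤ L - r k
  have ht0strong : t0 ≤ L - r k := by
    have h : ∀ t ∈ A, t ≤ (t0 + L - r k) / 2 := by
      intro t ht
      obtain ⟨⟨ht0', htL⟩, htR⟩ := ht
      have hlow : r k - (L - t) ≤ infDist (γ t) (P k) := by
        have h4 : infDist q (P k) ≤ infDist (γ t) (P k) + dist (γ t) q := by
          rw [dist_comm]; exact infDist_le_infDist_add_dist
        have h3 : dist (γ t) q = L - t := by
          rw [← hγL, hγd t ⟨ht0', htL⟩ L ⟨hL0, le_refl L⟩, abs_of_nonpos (by linarith)]; ring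
        rw [h3] at h4
        linarith [hqPk]
      have := hstrong t ⟨⟨ht0', htL⟩, htR⟩
      linarith
    have := csSup_le ⟨0, hA0⟩ h
    linarith
  -- step 2 : r k ≤ 2 * s for all s ∈ (t0, L]
  have hstep2 : ∀ s : ℝ, t0 < s → s ≤ L → r k ≤ 2 * s := by
    intro s hs1 hs2
    have hs0 : 0 ≤ s := le_trans ht00 (le_of_lt hs1)
    obtain ⟨m, hmk, hm⟩ := hbeyond s hs1 hs2
    have hpU : p ∈ ⋃ j ∈ {j : K | j ≠ m}, R j :=
      Set.mem_biUnion (Ne.symm hmk) (hPR k hpPk)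
    have h1 : infDist (γ s) (P m) ≤ infDist (γ s) (⋃ j ∈ {j : K | j ≠ m}, R j) :=
      hterr m hm
    have h2 : infDist (γ s) (⋃ j ∈ {j : K | j ≠ m}, R j) ≤ dist (γ s) p :=
      infDist_le_dist_of_mem hpU
    have h3 : dist (γ s) p = s := by
      rw [← hγ0, hγd s ⟨hs0, hs2⟩ 0 ⟨le_refl 0, hL0⟩, abs_of_nonneg (by linarith)]; ring
    have h4 : infDist p (P m) ≤ infDist (γ s) (P m) + dist (γ s) p := by
      rw [dist_comm]; exact infDist_le_infDist_add_dist
    have h5 : r k ≤ infDist p (P m) := hrk_le_inf m hmk p hpPk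
    rw [h3] at h4
    linarith
  have hrk2 : r k ≤ 2 * t0 := by
    have : ∀ δ : ℝ, 0 < δ → r k ≤ 2 * t0 + δ := by
      intro δ hδ
      set s := min (t0 + δ / 2) L with hsdef
      have hs1 : t0 < s := lt_min (by linarith) ht0L
      have hs2 : s ≤ L := min_le_right _ _
      have := hstep2 s hs1 hs2
      have hsle : s ≤ t0 + δ / 2 := min_le_left _ _
      linarith
    exact le_of_forall_pos_le_add this
  have := hrpos k
  linarith
end
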